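/- arXiv:2108.03924 — 2 statements merged into one kernel-verified Lean document; each statement's English description precedes it below -/
import Mathlib

section
/- Let A, B, C be real numbers and K = A I⊗I⊗I + B σ_z⊗σ_z⊗I + B σ_z⊗I⊗σ_z + C I⊗σ_z⊗σ_z in M₂(ℂ)^{⊗3}. Let h ∈ M₂(ℂ) be any matrix, and let tr₂₃ denote the normalized partial trace over the last two tensor factors (tr₂₃(a⊗b⊗c) = (1/4)Tr(b)Tr(c)·a). Then tr₂₃(K* (I⊗h⊗h) K) = (τ₁ T(h)² + τ₂ T_z(h)²) I + τ₃ T(h) T_z(h) σ_z, where T(h) = (h₁₁+h₂₂)/2, T_z(h) = (h₁₁−h₂₂)/2, τ₁ = A²+2B²+C², τ₂ = 2(AC+B²), τ₃ = 4B(A+C). -/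
open Matrix Kronecker

noncomputable section

def I2 : Matrix (Fin 2) (Fin 2) ℂ := 1

def sigmaZ : Matrix (Fin 2) (Fin 2) ℂ := !![1, 0; 0, -1]

/-- Type of elements of `M₂(ℂ) ⊗ M₂(ℂ) ⊗ M₂(ℂ)` realized as `8×8` matrices. -/
abbrev M8 := Matrix ((Fin 2 × Fin 2) × Fin 2) ((Fin 2 × Fin 2) × Fin 2) ℂ

/-- Normalized partial trace over the last two tensor factors:
`tr₂₃(a ⊗ b ⊗ c) = (1/4) Tr(b) Tr(c) · a`, extended linearly. -/
def tr23 (K : M8) : Matrix (Fin 2) (Fin 2) ℂ :=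
  fun i j => (1 / 4 : ℂ) * ∑ k : Fin 2, ∑ l : Fin 2, K ((i, k), l) ((j, k), l)

/-- `K = A I⊗I⊗I + B σ_z⊗σ_z⊗I + B σ_z⊗I⊗σ_z + C I⊗σ_z⊗σ_z`. -/
def KABC (A B C : ℝ) : M8 :=
  (A : ℂ) • ((I2 ⊗ₖ I2) ⊗ₖ I2) + (B : ℂ) • ((sigmaZ ⊗ₖ sigmaZ) ⊗ₖ I2) +
    (B : ℂ) • ((sigmaZ ⊗ₖ I2) ⊗ₖ sigmaZ) + (C : ℂ) • ((I2 ⊗ₖ sigmaZ) ⊗ₖ sigmaZ)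

set_option maxHeartbeats 2000000

/-- Action of the Ising transition expectation on `I ⊗ h ⊗ h`. -/
theorem tr23_KABC_action (A B C : ℝ) (h : Matrix (Fin 2) (Fin 2) ℂ) :
    tr23 ((KABC A B C)ᴴ * ((I2 ⊗ₖ h) ⊗ₖ h) * KABC A B C) =
      (((A ^ 2 + 2 * B ^ 2 + C ^ 2 : ℝ) : ℂ) * ((h 0 0 + h 1 1) / 2) ^ 2 +
          ((2 * (A * C + B ^ 2) : ℝ) : ℂ) * ((h 0 0 - h 1 1) / 2) ^ 2) • I2 +
        (((4 * B * (A + C) : ℝ) : ℂ) * ((h 0 0 + h 1 1) / 2) *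
          ((h 0 0 - h 1 1) / 2)) • sigmaZ := by
  ext i j
  fin_cases i <;> fin_cases j <;>
  · simp only [tr23, KABC, I2, sigmaZ, Matrix.mul_apply, Matrix.add_apply, Matrix.smul_apply,
      Matrix.kroneckerMap_apply, Fintype.sum_prod_type, Fin.sum_univ_two,
      Matrix.conjTranspose_apply, Matrix.one_apply, Matrix.cons_val', Matrix.cons_val_zero,
      Matrix.cons_val_one, Matrix.head_cons, Matrix.empty_val', Matrix.cons_val_fin_one,
      Matrix.head_fin_const, smul_eq_mul, star_add, star_mul', RCLike.star_def, map_ofNat,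
      Complex.conj_ofReal]
    norm_num
    try ring
end
end

section
/- Let β > 0, J > 0 and let K ∈ M₂(ℂ)^{⊗3} be the Ising interaction operator K = A I⊗I⊗I + B σ_z⊗σ_z⊗I + B σ_z⊗I⊗σ_z + C I⊗σ_z⊗σ_z with A = K₀²R₀+K₃²R₃, B = K₀K₃(R₀+R₃), C = K₀²R₃+K₃²R₀, where K₀=(e^β+1)/2, K₃=(e^β−1)/2, R₀=(e^{Jβ}+1)/2, R₃=(e^{Jβ}−1)/2. Set α = 1/τ₁ with τ₁ = A²+2B²+C². Then h = α·I satisfies the invariance equation tr₂₃(K* (I ⊗ h ⊗ h) K) = h. -/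
/-! `K` is diagonal with real entries and `I ⊗ h ⊗ h = α² · 1`, so the left side is `α² tr₂₃(K²)`.
The four products `I⊗I⊗I`, `σ_z⊗σ_z⊗I`, `σ_z⊗I⊗σ_z`, `I⊗σ_z⊗σ_z` are orthonormal for `tr₂₃`
(the product of two distinct ones has a traceless `σ_z` in the second or third factor), hence
`tr₂₃(K²) = τ₁ I` and the left side is `α² τ₁ I = α I`. Finally `τ₁ > 0` because
`A + C = (K₀² + K₃²) e^{Jβ} > 0`. -/

open Matrix Kronecker

noncomputable section

def spin : Fin 2 → ℝ := ![1, -1]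

lemma sigmaZ_eq_diagonal : sigmaZ = diagonal fun i => (spin i : ℂ) := by
  ext i j; fin_cases i <;> fin_cases j <;> simp [sigmaZ, spin]

def isingWeight (A B C : ℝ) (p : (Fin 2 × Fin 2) × Fin 2) : ℝ :=
  A + B * spin p.1.1 * spin p.1.2 + B * spin p.1.1 * spin p.2 + C * spin p.1.2 * spin p.2

lemma KABC_eq_diagonal (A B C : ℝ) :
    KABC A B C = diagonal fun p => (isingWeight A B C p : ℂ) := by
  rw [KABC, sigmaZ_eq_diagonal, I2, ← diagonal_one]
  simp only [diagonal_kronecker_diagonal, ← diagonal_smul, diagonal_add]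
  congr 1
  ext p
  simp only [isingWeight, Pi.smul_apply, smul_eq_mul]
  push_cast
  ring

lemma KABC_conjTranspose (A B C : ℝ) : (KABC A B C)ᴴ = KABC A B C := by
  rw [KABC_eq_diagonal, diagonal_conjTranspose]
  congr 1
  ext p
  simp

lemma sum_isingWeight_sq (A B C : ℝ) (i : Fin 2) :
    ∑ k : Fin 2, ∑ l : Fin 2, isingWeight A B C ((i, k), l) ^ 2 =
      4 * (A ^ 2 + 2 * B ^ 2 + C ^ 2) := by
  fin_cases i <;> simp [isingWeight, spin, Fin.sum_univ_two] <;> ring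

lemma tr23_diagonal (f : (Fin 2 × Fin 2) × Fin 2 → ℂ) :
    tr23 (diagonal f) =
      diagonal fun i => (1 / 4 : ℂ) * ∑ k : Fin 2, ∑ l : Fin 2, f ((i, k), l) := by
  ext i j
  by_cases hij : i = j
  · subst hij; simp [tr23]
  · simp [tr23, hij]

lemma tr23_smul (c : ℂ) (K : M8) : tr23 (c • K) = c • tr23 K := by
  ext i j
  simp only [tr23, Matrix.smul_apply, smul_eq_mul, Finset.mul_sum]
  ring_nf

lemma tr23_KABC_mul_self (A B C : ℝ) :
    tr23 (KABC A B C * KABC A B C) = ((A ^ 2 + 2 * B ^ 2 + C ^ 2 : ℝ) : ℂ) • I2 := by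
  rw [KABC_eq_diagonal, diagonal_mul_diagonal, tr23_diagonal, I2, ← diagonal_one, ← diagonal_smul]
  congr 1
  ext i
  simp only [Pi.smul_apply, smul_eq_mul, mul_one, ← sq, ← Complex.ofReal_pow,
    ← Complex.ofReal_sum, sum_isingWeight_sq]
  push_cast
  ring

lemma I2_kronecker_smul_I2 (c : ℂ) : (I2 ⊗ₖ (c • I2)) ⊗ₖ (c • I2) = c ^ 2 • (1 : M8) := by
  simp only [I2, kronecker_smul, smul_kronecker, one_kronecker_one, smul_smul, sq]

lemma tr23_KABC_invariant (A B C : ℝ) (hτ : A ^ 2 + 2 * B ^ 2 + C ^ 2 ≠ 0) :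
    let h : Matrix (Fin 2) (Fin 2) ℂ := ((1 / (A ^ 2 + 2 * B ^ 2 + C ^ 2) : ℝ) : ℂ) • I2
    tr23 ((KABC A B C)ᴴ * ((I2 ⊗ₖ h) ⊗ₖ h) * KABC A B C) = h := by
  intro h
  rw [I2_kronecker_smul_I2, KABC_conjTranspose, Matrix.mul_smul, mul_one, Matrix.smul_mul,
    tr23_smul, tr23_KABC_mul_self, smul_smul]
  congr 1
  rw [← Complex.ofReal_pow, ← Complex.ofReal_mul, sq, mul_assoc, one_div_mul_cancel hτ, mul_one]

lemma sq_add_two_mul_sq_add_sq_pos {A B C : ℝ} (h : 0 < A + C) :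
    0 < A ^ 2 + 2 * B ^ 2 + C ^ 2 := by
  nlinarith [sq_nonneg (A - C), sq_nonneg B]

theorem invariance_identity_general (β J : ℝ) :
    let K0 : ℝ := (Real.exp β + 1) / 2
    let K3 : ℝ := (Real.exp β - 1) / 2
    let R0 : ℝ := (Real.exp (J * β) + 1) / 2
    let R3 : ℝ := (Real.exp (J * β) - 1) / 2
    let A : ℝ := K0 ^ 2 * R0 + K3 ^ 2 * R3
    let B : ℝ := K0 * K3 * (R0 + R3)
    let C : ℝ := K0 ^ 2 * R3 + K3 ^ 2 * R0
    let τ₁ : ℝ := A ^ 2 + 2 * B ^ 2 + C ^ 2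
    let h : Matrix (Fin 2) (Fin 2) ℂ := ((1 / τ₁ : ℝ) : ℂ) • I2
    tr23 ((KABC A B C)ᴴ * ((I2 ⊗ₖ h) ⊗ₖ h) * KABC A B C) = h := by
  intro K0 K3 R0 R3 A B C τ₁ h
  have hAC : A + C = (K0 ^ 2 + K3 ^ 2) * Real.exp (J * β) := by simp only [A, C, R0, R3]; ring
  have hτ : 0 < τ₁ := sq_add_two_mul_sq_add_sq_pos (hAC ▸ by positivity)
  exact tr23_KABC_invariant A B C hτ.ne'

/-- `h = (1/τ₁) I` is invariant under the Ising transition expectation. -/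
theorem invariance_identity (β J : ℝ) (hβ : 0 < β) (hJ : 0 < J) :
    let K0 : ℝ := (Real.exp β + 1) / 2
    let K3 : ℝ := (Real.exp β - 1) / 2
    let R0 : ℝ := (Real.exp (J * β) + 1) / 2
    let R3 : ℝ := (Real.exp (J * β) - 1) / 2
    let A : ℝ := K0 ^ 2 * R0 + K3 ^ 2 * R3
    let B : ℝ := K0 * K3 * (R0 + R3)
    let C : ℝ := K0 ^ 2 * R3 + K3 ^ 2 * R0
    let τ₁ : ℝ := A ^ 2 + 2 * B ^ 2 + C ^ 2
    let h : Matrix (Fin 2) (Fin 2) ℂ := ((1 / τ₁ : ℝ) : ℂ) • I2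
    tr23 ((KABC A B C)ᴴ * ((I2 ⊗ₖ h) ⊗ₖ h) * KABC A B C) = h :=
  invariance_identity_general β J
end
end
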